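/- arXiv:1009.3954 — 2 statements merged into one kernel-verified Lean document; each statement's English description precedes it below -/
import Mathlib

section
/- Let (G,p) be an infinite locally finite framework in ℝ^d with connected graph, exhausted by finite subframeworks (G_1,p) ⊆ (G_2,p) ⊆ ⋯, with distinguished vertices v₁, v₂ in G₁. Suppose that for each r there is a smooth base-fixed flex p^r(t) of (G_r,p) such that (i) for each l, the restrictions of the flexes p^r (r ≥ l) to G_l have uniformly bounded derivatives: |d/dt p_k^r(t)| ≤ M_l for all r ≥ l and vertices v_k ∈ V_l, and (ii) |p^r_1(1) − p^r_2(1)| − |p^r_1(0) − p^r_2(0)| ≥ c > 0 for all r. Then (G,p) has a nontrivial continuous flex (a deformation). -/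
open Filter Topology Set

set_option maxHeartbeats 1600000

lemma aux_mvt_bound {d : ℕ} (f : ℝ → EuclideanSpace ℝ (Fin d)) (hf : Differentiable ℝ f)
    (C : ℝ) (h : ∀ x ∈ Set.Icc (0:ℝ) 1, ‖deriv f x‖ ≤ C) :
    ∀ s ∈ Set.Icc (0:ℝ) 1, ∀ t ∈ Set.Icc (0:ℝ) 1, ‖f t - f s‖ ≤ C * ‖t - s‖ := by
  intro s hs t ht
  refine Convex.norm_image_sub_le_of_norm_hasDerivWithin_le
    (f' := fun x => deriv f x) ?_ ?_ (convex_Icc 0 1) hs ht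
  · intro x _
    exact (hf x).hasDerivAt.hasDerivWithinAt
  · intro x hx
    exact h x hx

/-- Let `(G,p)` be an infinite locally finite framework in `ℝ^d` with connected graph,
exhausted by finite subframeworks `(G_r, p)` with distinguished vertices `v₁, v₂ ∈ G₁`.
Suppose for each `r` there is a smooth base-fixed flex `q r` of `(G_r,p)` such that
(i) on each fixed `G_l` the flexes `q r` (`r ≥ l`) have uniformly bounded derivatives, and
(ii) each flex separates `v₁, v₂` by at least `c > 0`.
Then `(G,p)` has a deformation: a base-fixed proper continuous flex. -/
theorem deformation_of_uniformly_smooth_flexes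
    {d : ℕ} {V : Type*} [Infinite V]
    (E : Set (V × V)) (p : V → EuclideanSpace ℝ (Fin d))
    (hconn : ∀ u v : V,
      Relation.ReflTransGen (fun a b => (a, b) ∈ E ∨ (b, a) ∈ E) u v)
    (hlocfin : ∀ v : V, {u : V | (v, u) ∈ E ∨ (u, v) ∈ E}.Finite)
    (Vs : ℕ → Set V) (Es : ℕ → Set (V × V))
    (hVfin : ∀ r, (Vs r).Finite)
    (hVmono : Monotone Vs) (hEmono : Monotone Es)
    (hVU : (⋃ r, Vs r) = Set.univ) (hEU : (⋃ r, Es r) = E)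
    (hEsub : ∀ r, ∀ e ∈ Es r, e.1 ∈ Vs r ∧ e.2 ∈ Vs r)
    (B : Set V) (hB : B ⊆ Vs 0)
    (v₁ v₂ : V) (hv₁ : v₁ ∈ Vs 0) (hv₂ : v₂ ∈ Vs 0)
    (c : ℝ) (hc : 0 < c) (M : ℕ → ℝ)
    (q : ℕ → ℝ → V → EuclideanSpace ℝ (Fin d))
    (hstart : ∀ r, ∀ v ∈ Vs r, q r 0 v = p v)
    (hsmooth : ∀ r, ∀ v ∈ Vs r, ContDiff ℝ (⊤ : ℕ∞) (fun t => q r t v))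
    (hbase : ∀ r, ∀ v ∈ B, ∀ t : ℝ, q r t v = p v)
    (hedge : ∀ r, ∀ e ∈ Es r, ∀ t ∈ Set.Icc (0 : ℝ) 1,
      dist (q r t e.1) (q r t e.2) = dist (p e.1) (p e.2))
    (hproper : ∀ r, ∃ t ∈ Set.Icc (0 : ℝ) 1, ∃ v ∈ Vs r, q r t v ≠ p v)
    (hderiv : ∀ l r : ℕ, l ≤ r → ∀ v ∈ Vs l, ∀ t ∈ Set.Icc (0 : ℝ) 1,
      ‖deriv (fun s => q r s v) t‖ ≤ M l)
    (hsep : ∀ r, dist (q r 1 v₁) (q r 1 v₂) - dist (q r 0 v₁) (q r 0 v₂) ≥ c) :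
    ∃ qq : ℝ → V → EuclideanSpace ℝ (Fin d),
      (∀ v : V, ContinuousOn (fun t => qq t v) (Set.Icc (0 : ℝ) 1)) ∧
      (∀ v : V, qq 0 v = p v) ∧
      (∀ v ∈ B, ∀ t : ℝ, qq t v = p v) ∧
      (∀ e ∈ E, ∀ t ∈ Set.Icc (0 : ℝ) 1,
        dist (qq t e.1) (qq t e.2) = dist (p e.1) (p e.2)) ∧
      (∃ t ∈ Set.Icc (0 : ℝ) 1, qq t ≠ p) := by
  classical
  -- the nonprincipal ultrafilter
  set U : Ultrafilter ℕ := Filter.hyperfilter ℕ with hUdef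
  have hUat : (U : Filter ℕ) ≤ atTop := Nat.hyperfilter_le_atTop
  have hUge : ∀ l : ℕ, ∀ᶠ r in (U : Filter ℕ), l ≤ r := fun l =>
    (eventually_ge_atTop l).filter_mono hUat
  -- clamping to [0,1]
  set cl : ℝ → ℝ := fun t => max 0 (min t 1) with hcldef
  have hclmem : ∀ t, cl t ∈ Set.Icc (0 : ℝ) 1 := by
    intro t
    constructor
    · exact le_max_left _ _
    · simp only [hcldef, max_le_iff]
      exact ⟨zero_le_one, min_le_right _ _⟩
  have hclid : ∀ t ∈ Set.Icc (0 : ℝ) 1, cl t = t := by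
    rintro t ⟨h0, h1⟩
    simp [hcldef, min_eq_left h1, max_eq_right h0]
  have hclW : LipschitzWith 1 cl := by
    rw [hcldef]
    have h1 : LipschitzWith 1 (fun t : ℝ => min t 1) := by
      simpa using LipschitzWith.min LipschitzWith.id (LipschitzWith.const (1:ℝ))
    simpa using LipschitzWith.max (LipschitzWith.const (0:ℝ)) h1
  have hcllip : ∀ s t : ℝ, |cl t - cl s| ≤ |t - s| := fun s t => by
    simpa [Real.dist_eq] using hclW.dist_le_mul t s
  -- each vertex appears in some Vs
  have hex : ∀ v : V, ∃ r, v ∈ Vs r := by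
    intro v
    have : v ∈ ⋃ r, Vs r := hVU ▸ Set.mem_univ v
    exact Set.mem_iUnion.1 this
  choose lv hlv using hex
  set M' : V → ℝ := fun v => max (M (lv v)) 0 with hM'def
  have hM'0 : ∀ v, 0 ≤ M' v := fun v => le_max_right _ _
  -- mean value estimate
  have key : ∀ (v : V) (r : ℕ), lv v ≤ r → ∀ s ∈ Set.Icc (0 : ℝ) 1, ∀ t ∈ Set.Icc (0 : ℝ) 1,
      ‖q r t v - q r s v‖ ≤ M' v * ‖t - s‖ := by
    intro v r hr s hs t ht
    have hvr : v ∈ Vs r := hVmono hr (hlv v)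
    have hdiff : Differentiable ℝ (fun s => q r s v) :=
      (hsmooth r v hvr).differentiable (by simp)
    exact aux_mvt_bound (fun s => q r s v) hdiff (M' v)
      (fun x hx => (hderiv (lv v) r hr v (hlv v) x hx).trans (le_max_left _ _)) s hs t ht
    -- the approximating sequence
  set F : ℝ → V → ℕ → EuclideanSpace ℝ (Fin d) :=
    fun t v r => if lv v ≤ r then q r (cl t) v else p v with hFdef
  have hFbound : ∀ t v r, F t v r ∈ Metric.closedBall (p v) (M' v) := by
    intro t v r
    rw [Metric.mem_closedBall, dist_eq_norm]
    by_cases hr : lv v ≤ r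
    · simp only [hFdef, if_pos hr]
      have h0 : q r 0 v = p v := hstart r v (hVmono hr (hlv v))
      calc ‖q r (cl t) v - p v‖ = ‖q r (cl t) v - q r 0 v‖ := by rw [h0]
        _ ≤ M' v * ‖cl t - 0‖ := key v r hr 0 ⟨le_refl _, zero_le_one⟩ (cl t) (hclmem t)
        _ ≤ M' v * 1 := by
            refine mul_le_mul_of_nonneg_left ?_ (hM'0 v)
            rw [sub_zero, Real.norm_eq_abs, abs_of_nonneg (hclmem t).1]
            exact (hclmem t).2
        _ = M' v := mul_one _
    · simp [hFdef, if_neg hr, hM'0 v]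
  -- existence of ultrafilter limits
  have hlim : ∀ (t : ℝ) (v : V), ∃ x, Tendsto (F t v) (U : Filter ℕ) (𝓝 x) := by
    intro t v
    have hcpt : IsCompact (Metric.closedBall (p v) (M' v)) :=
      isCompact_closedBall _ _
    obtain ⟨x, -, hx⟩ := hcpt.ultrafilter_le_nhds (U.map (F t v)) (by
      rw [Ultrafilter.coe_map, le_principal_iff, mem_map]
      exact univ_mem' (fun r => hFbound t v r))
    rw [Ultrafilter.coe_map] at hx
    exact ⟨x, hx⟩
  choose qq hqq using hlim
  -- eventual description of F
  have hFev : ∀ (t : ℝ) (v : V), ∀ᶠ r in (U : Filter ℕ), F t v r = q r (cl t) v := by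
    intro t v
    filter_upwards [hUge (lv v)] with r hr
    simp [hFdef, if_pos hr]
  refine ⟨qq, ?_, ?_, ?_, ?_, ?_⟩
  · -- continuity (via Lipschitz bound on limits)
    intro v
    have hlip : ∀ s t : ℝ, dist (qq t v) (qq s v) ≤ M' v * dist t s := by
      intro s t
      have hev : ∀ᶠ r in (U : Filter ℕ), dist (F t v r) (F s v r) ≤ M' v * dist t s := by
        filter_upwards [hUge (lv v)] with r hr
        simp only [hFdef, if_pos hr]
        rw [dist_eq_norm]
        calc ‖q r (cl t) v - q r (cl s) v‖ ≤ M' v * ‖cl t - cl s‖ :=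
              key v r hr (cl s) (hclmem s) (cl t) (hclmem t)
          _ ≤ M' v * dist t s := by
              refine mul_le_mul_of_nonneg_left ?_ (hM'0 v)
              rw [Real.norm_eq_abs, Real.dist_eq]
              exact hcllip s t
      have htend : Tendsto (fun r => dist (F t v r) (F s v r)) (U : Filter ℕ)
          (𝓝 (dist (qq t v) (qq s v))) := (hqq t v).dist (hqq s v)
      exact le_of_tendsto htend hev
    have : LipschitzWith ⟨M' v, hM'0 v⟩ (fun t => qq t v) := by
      refine LipschitzWith.of_dist_le_mul fun t s => ?_
      exact hlip s t
    exact this.continuous.continuousOn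
  · -- starts at p
    intro v
    have hev : ∀ᶠ r in (U : Filter ℕ), F 0 v r = p v := by
      filter_upwards [hFev 0 v, hUge (lv v)] with r h1 hr
      rw [h1, hclid 0 ⟨le_refl _, zero_le_one⟩]
      exact hstart r v (hVmono hr (hlv v))
    have : Tendsto (F 0 v) (U : Filter ℕ) (𝓝 (p v)) :=
      Tendsto.congr' (by filter_upwards [hev] with r h; exact h.symm) tendsto_const_nhds
    exact tendsto_nhds_unique (hqq 0 v) this
  · -- base fixed
    intro v hvB t
    have hev : ∀ᶠ r in (U : Filter ℕ), F t v r = p v := by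
      filter_upwards [hFev t v] with r h1
      rw [h1]; exact hbase r v hvB (cl t)
    have : Tendsto (F t v) (U : Filter ℕ) (𝓝 (p v)) :=
      Tendsto.congr' (by filter_upwards [hev] with r h; exact h.symm) tendsto_const_nhds
    exact tendsto_nhds_unique (hqq t v) this
  · -- edge lengths preserved
    intro e heE t ht
    obtain ⟨l₀, hl₀⟩ : ∃ l₀, e ∈ Es l₀ := Set.mem_iUnion.1 (hEU ▸ heE)
    have hev : ∀ᶠ r in (U : Filter ℕ),
        dist (F t e.1 r) (F t e.2 r) = dist (p e.1) (p e.2) := by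
      filter_upwards [hFev t e.1, hFev t e.2, hUge l₀] with r h1 h2 hr
      rw [h1, h2, hclid t ht]
      exact hedge r e (hEmono hr hl₀) t ht
    have h₁ : Tendsto (fun r => dist (F t e.1 r) (F t e.2 r)) (U : Filter ℕ)
        (𝓝 (dist (qq t e.1) (qq t e.2))) := (hqq t e.1).dist (hqq t e.2)
    have h₂ : Tendsto (fun r => dist (F t e.1 r) (F t e.2 r)) (U : Filter ℕ)
        (𝓝 (dist (p e.1) (p e.2))) :=
      Tendsto.congr' (by filter_upwards [hev] with r h; exact h.symm) tendsto_const_nhds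
    exact tendsto_nhds_unique h₁ h₂
  · -- proper at t = 1
    refine ⟨1, ⟨zero_le_one, le_refl _⟩, ?_⟩
    have hsepq : dist (qq 1 v₁) (qq 1 v₂) ≥ dist (p v₁) (p v₂) + c := by
      have hev : ∀ᶠ r in (U : Filter ℕ),
          dist (p v₁) (p v₂) + c ≤ dist (F 1 v₁ r) (F 1 v₂ r) := by
        filter_upwards [hFev 1 v₁, hFev 1 v₂, hUge 0] with r h1 h2 hr
        rw [h1, h2, hclid 1 ⟨zero_le_one, le_refl _⟩]
        have hs := hsep r
        have e1 : q r 0 v₁ = p v₁ := hstart r v₁ (hVmono (Nat.zero_le r) hv₁)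
        have e2 : q r 0 v₂ = p v₂ := hstart r v₂ (hVmono (Nat.zero_le r) hv₂)
        rw [e1, e2] at hs
        linarith
      have htend : Tendsto (fun r => dist (F 1 v₁ r) (F 1 v₂ r)) (U : Filter ℕ)
          (𝓝 (dist (qq 1 v₁) (qq 1 v₂))) := (hqq 1 v₁).dist (hqq 1 v₂)
      exact ge_of_tendsto htend hev
    intro hcon
    have h1 : qq 1 v₁ = p v₁ := by rw [hcon]
    have h2 : qq 1 v₂ = p v₂ := by rw [hcon]
    rw [h1, h2] at hsepq
    linarith
end

section
/- The determinant of the 6×6 kagome symbol matrix Φ_kag(z,w) = (1/4)·[[−2,0,2,0,0,0],[0,0,1,−√3,−1,√3],[−1,−√3,0,0,1,√3],[2,0,−2z,0,0,0],[0,0,−1,√3,z̄w,−√3 z̄w],[w̄,√3 w̄,0,0,−1,−√3]] is a nonzero scalar and monomial multiple of z w (z̄ − 1)(w̄ − 1)(z̄ − w̄), for z, w on the unit circle (where z̄ = z^{-1}, w̄ = w^{-1}). -/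
/-!
Adding the first row of `4 Φ_kag` to the fourth leaves the single entry `2(1 - z)` there, and
adding the second row to the fifth turns it into `(z̄w - 1)(0, 0, 0, 0, 1, -√3)`; the
determinant left after taking out these two factors is `±12√3(1 - w̄)`. Hence, as a polynomial
identity in `z, z̄, w, w̄` with no relation between them, `det Φ_kag` is a constant multiple of
`(1 - z)(w̄ - 1)(z̄w - 1)`. On the torus `z(z̄ - 1) = 1 - z` and `w(z̄ - w̄) = z̄w - 1`, which
gives the claimed factorisation with `a = b = 0`.
-/

noncomputable section

/-- The 6×6 matricial symbol function of the kagome framework for its standard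
six-edge, three-vertex motif (`z̄ = z⁻¹`, `w̄ = w⁻¹` on the torus). -/
def kagomeSymbol (z w : ℂ) : Matrix (Fin 6) (Fin 6) ℂ :=
  (1 / 4 : ℂ) •
    !![-2, 0, 2, 0, 0, 0;
       0, 0, 1, -(Real.sqrt 3 : ℂ), -1, (Real.sqrt 3 : ℂ);
       -1, -(Real.sqrt 3 : ℂ), 0, 0, 1, (Real.sqrt 3 : ℂ);
       2, 0, -2 * z, 0, 0, 0;
       0, 0, -1, (Real.sqrt 3 : ℂ), z⁻¹ * w, -(Real.sqrt 3 : ℂ) * (z⁻¹ * w);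
       w⁻¹, (Real.sqrt 3 : ℂ) * w⁻¹, 0, 0, -1, -(Real.sqrt 3 : ℂ)]

theorem det_kagomeSymbol (z w : ℂ) :
    (kagomeSymbol z w).det =
      -(√3 : ℂ) ^ 3 / 512 * ((1 - z) * (w⁻¹ - 1) * (z⁻¹ * w - 1)) := by
  rw [kagomeSymbol, Matrix.det_smul, Fintype.card_fin]
  simp only [Matrix.det_succ_row_zero, Fin.sum_univ_succ, Matrix.det_unique, Finset.univ_unique,
    Finset.sum_singleton, Matrix.submatrix_apply, Matrix.of_apply, Fin.succAbove, Matrix.cons_val,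
    Fin.reduceSucc, Fin.reduceCastSucc, Fin.reduceLT, ↓reduceIte, Fin.default_eq_zero,
    Fin.coe_ofNat_eq_mod]
  ring

theorem mul_mul_inv_sub_one_mul_inv_sub_one_mul_inv_sub_inv {K : Type*} [Field K] {z w : K}
    (hz : z ≠ 0) (hw : w ≠ 0) :
    z * w * (z⁻¹ - 1) * (w⁻¹ - 1) * (z⁻¹ - w⁻¹) = (1 - z) * (w⁻¹ - 1) * (z⁻¹ * w - 1) := by
  field_simp

/-- The determinant of the kagome symbol matrix is a nonzero scalar and monomial multiple of
`z w (z̄ − 1)(w̄ − 1)(z̄ − w̄)` on the torus. -/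
theorem kagome_symbol_det :
    ∃ (c : ℂ) (a b : ℤ), c ≠ 0 ∧
      ∀ z w : ℂ, ‖z‖ = 1 → ‖w‖ = 1 →
        (kagomeSymbol z w).det =
          c * z ^ a * w ^ b * (z * w * (z⁻¹ - 1) * (w⁻¹ - 1) * (z⁻¹ - w⁻¹)) := by
  refine ⟨-(√3 : ℂ) ^ 3 / 512, 0, 0, by simp, fun z w hz hw => ?_⟩
  have hz₀ : z ≠ 0 := ne_zero_of_norm_ne_zero (hz ▸ one_ne_zero)
  have hw₀ : w ≠ 0 := ne_zero_of_norm_ne_zero (hw ▸ one_ne_zero)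
  rw [det_kagomeSymbol, mul_mul_inv_sub_one_mul_inv_sub_one_mul_inv_sub_inv hz₀ hw₀,
    zpow_zero, zpow_zero, mul_one, mul_one]

end
end
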